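/- (∞-Wasserstein bound for the block approximation) Let γ ∈ Π(μ,ν) and let γ^δ be its block approximation at scale δ ∈ (0,1). Then there exists a coupling η ∈ Π(γ, γ^δ) (a Borel probability measure on (ℝ^d×ℝ^d)×(ℝ^d×ℝ^d) with marginals γ and γ^δ) such that the η-essential supremum of the Euclidean distance |z − w| between paired points z, w ∈ ℝ^d×ℝ^d is at most √(2d)·δ; in particular W_∞(γ, γ^δ) ≤ √(2d)·δ. -/

import Mathlib

open MeasureTheory ENNReal Filter
open scoped Classical

noncomputable section

/-- ℝ^d with its Euclidean structure. -/
abbrev Rd (d : ℕ) := EuclideanSpace ℝ (Fin d)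

/-- γ ∈ Π(μ,ν): γ has first marginal μ and second marginal ν. -/
def IsCoupling {E F : Type*} [MeasurableSpace E] [MeasurableSpace F]
    (γ : Measure (E × F)) (μ : Measure E) (ν : Measure F) : Prop :=
  γ.map Prod.fst = μ ∧ γ.map Prod.snd = ν

/-- Relative entropy H(γ|ρ) = ∫ log(dγ/dρ) dγ if γ ≪ ρ (and the integral exists), +∞ otherwise. -/
def relEntropy {E : Type*} [MeasurableSpace E] (γ ρ : Measure E) : ℝ≥0∞ :=
  if γ ≪ ρ ∧ Integrable (llr γ ρ) γ then ENNReal.ofReal (∫ z, llr γ ρ z ∂γ) else ∞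

/-- The entropic functional J_{p,ε}(γ) = (∫ c^p dγ + ε H(γ|μ⊗ν))^{1/p} on Π(μ,ν), +∞ outside. -/
def Jpe {d : ℕ} (c : Rd d × Rd d → ℝ) (μ ν : Measure (Rd d)) (p ε : ℝ)
    (γ : Measure (Rd d × Rd d)) : ℝ≥0∞ :=
  if IsCoupling γ μ ν then
    (∫⁻ z, ENNReal.ofReal (c z ^ p) ∂γ + ENNReal.ofReal ε * relEntropy γ (μ.prod ν)) ^ (1 / p)
  else ∞

/-- The supremal functional J_∞(γ) = γ-ess sup c on Π(μ,ν), +∞ outside. -/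
def Jinf {d : ℕ} (c : Rd d × Rd d → ℝ) (μ ν : Measure (Rd d))
    (γ : Measure (Rd d × Rd d)) : ℝ≥0∞ :=
  if IsCoupling γ μ ν then essSup (fun z => ENNReal.ofReal (c z)) γ else ∞

/-- Weak-star convergence of a family of (probability) measures, as the real parameter p → ∞. -/
def WeakStarTendsto {E : Type*} [MeasurableSpace E] [TopologicalSpace E]
    (γ : ℝ → Measure E) (γ₀ : Measure E) : Prop :=
  ∀ f : BoundedContinuousFunction E ℝ,
    Tendsto (fun p => ∫ z, f z ∂(γ p)) atTop (nhds (∫ z, f z ∂γ₀))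

/-- The support of a Borel measure: points all of whose neighborhoods have positive measure. -/
def msupport {E : Type*} [MeasurableSpace E] [TopologicalSpace E] (μ : Measure E) : Set E :=
  {x | ∀ U ∈ nhds x, μ U ≠ 0}

/-- The half-open cube Q_k^δ = δ(k + [0,1)^d). -/
def blockCube (d : ℕ) (δ : ℝ) (k : Fin d → ℤ) : Set (Rd d) :=
  {x | ∀ i, x i ∈ Set.Ico (δ * k i) (δ * (k i + 1))}

/-- The normalized restriction μ_Q = μ(Q ∩ ·)/μ(Q). -/
def normRestrict {E : Type*} [MeasurableSpace E] (μ : Measure E) (Q : Set E) : Measure E :=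
  (μ Q)⁻¹ • μ.restrict Q

/-- The block approximation γ^δ = ∑_{k,l} γ(Q_k^δ × Q_l^δ) μ_k^δ ⊗ ν_l^δ
    (terms with μ(Q_k^δ) = 0 or ν(Q_l^δ) = 0 vanish automatically). -/
def blockApprox {d : ℕ} (μ ν : Measure (Rd d)) (γ : Measure (Rd d × Rd d)) (δ : ℝ) :
    Measure (Rd d × Rd d) :=
  Measure.sum (fun kl : (Fin d → ℤ) × (Fin d → ℤ) =>
    γ (blockCube d δ kl.1 ×ˢ blockCube d δ kl.2) •
      ((normRestrict μ (blockCube d δ kl.1)).prod (normRestrict ν (blockCube d δ kl.2))))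

/-! Inside each cell `Q_k × Q_l` the block approximation redistributes the `γ`-mass of the cell
according to `μ_k ⊗ ν_l`. Coupling the restriction of `γ` to each cell independently with that
normalized product gives a transport plan that never moves a point out of its cell: its first
marginal is `γ` because every block of positive `γ`-mass has mass one, its second marginal is
`γ^δ`, and a cell of `ℝ^d × ℝ^d` has diameter at most `√(2d) δ`. -/

instance normRestrict.instSFinite {E : Type*} [MeasurableSpace E] (μ : Measure E) [SFinite μ]
    (Q : Set E) : SFinite (normRestrict μ Q) := by
  unfold normRestrict; infer_instance

section normRestrict

variable {E : Type*} [MeasurableSpace E] {μ : Measure E} {Q : Set E}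

lemma normRestrict_apply_univ (h₀ : μ Q ≠ 0) (h_top : μ Q ≠ ∞) :
    normRestrict μ Q Set.univ = 1 := by
  simp [normRestrict, ENNReal.inv_mul_cancel h₀ h_top]

lemma ae_normRestrict_mem (hQ : MeasurableSet Q) : ∀ᵐ x ∂normRestrict μ Q, x ∈ Q :=
  Measure.ae_smul_measure (ae_restrict_mem hQ) _

end normRestrict

section IsCoupling

variable {E F : Type*} [MeasurableSpace E] [MeasurableSpace F]
  {γ : Measure (E × F)} {μ : Measure E} {ν : Measure F}

lemma IsCoupling.isProbabilityMeasure (h : IsCoupling γ μ ν) [IsProbabilityMeasure μ] :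
    IsProbabilityMeasure γ :=
  have : IsProbabilityMeasure (γ.map Prod.fst) := h.1 ▸ ‹_›
  Measure.isProbabilityMeasure_of_map Prod.fst

lemma IsCoupling.apply_prod_le_left (h : IsCoupling γ μ ν) {A : Set E} (hA : MeasurableSet A)
    (B : Set F) : γ (A ×ˢ B) ≤ μ A := by
  rw [← h.1, Measure.map_apply measurable_fst hA]
  exact measure_mono fun z hz => hz.1

lemma IsCoupling.apply_prod_le_right (h : IsCoupling γ μ ν) (A : Set E) {B : Set F}
    (hB : MeasurableSet B) : γ (A ×ˢ B) ≤ ν B := by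
  rw [← h.2, Measure.map_apply measurable_snd hB]
  exact measure_mono fun z hz => hz.2

end IsCoupling

lemma MeasureTheory.Measure.sum_restrict_preimage_singleton {α ι : Type*} [MeasurableSpace α]
    [MeasurableSpace ι] [MeasurableSingletonClass ι] [Countable ι] (μ : Measure α) {f : α → ι}
    (hf : Measurable f) : Measure.sum (fun i => μ.restrict (f ⁻¹' {i})) = μ := by
  rw [← Measure.restrict_iUnion (pairwise_disjoint_fiber f)
    fun i => hf (measurableSet_singleton i),
    (Set.iUnion_eq_univ_iff (f := fun i => f ⁻¹' {i})).2 fun x => ⟨f x, rfl⟩,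
    Measure.restrict_univ]

section Partition

variable {E F ι κ : Type*} [MeasurableSpace E] [MeasurableSpace F]
  (μ : Measure E) (ν : Measure F) (γ : Measure (E × F)) (f : E → ι) (g : F → κ)

def partitionBlock (kl : ι × κ) : Measure (E × F) :=
  (normRestrict μ (f ⁻¹' {kl.1})).prod (normRestrict ν (g ⁻¹' {kl.2}))

def partitionApprox : Measure (E × F) :=
  Measure.sum fun kl : ι × κ => γ ((f ⁻¹' {kl.1}) ×ˢ (g ⁻¹' {kl.2})) • partitionBlock μ ν f g kl

def partitionCoupling : Measure ((E × F) × (E × F)) :=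
  Measure.sum fun kl : ι × κ =>
    (γ.restrict ((f ⁻¹' {kl.1}) ×ˢ (g ⁻¹' {kl.2}))).prod (partitionBlock μ ν f g kl)

instance partitionBlock.instSFinite [SFinite μ] [SFinite ν] (kl : ι × κ) :
    SFinite (partitionBlock μ ν f g kl) := by
  unfold partitionBlock; infer_instance

variable {μ ν γ f g}

lemma map_snd_partitionCoupling [SFinite μ] [SFinite ν] :
    (partitionCoupling μ ν γ f g).map Prod.snd = partitionApprox μ ν γ f g := by
  simp only [partitionCoupling, partitionApprox, Measure.map_sum measurable_snd.aemeasurable,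
    Measure.map_snd_prod, Measure.restrict_apply_univ]

variable [MeasurableSpace ι] [MeasurableSingletonClass ι] [Countable ι]
  [MeasurableSpace κ] [MeasurableSingletonClass κ] [Countable κ]

lemma map_fst_partitionCoupling [IsFiniteMeasure μ] [IsFiniteMeasure ν] (hγ : IsCoupling γ μ ν)
    (hf : Measurable f) (hg : Measurable g) :
    (partitionCoupling μ ν γ f g).map Prod.fst = γ := by
  have hcell : ∀ kl : ι × κ,
      (fun z : E × F => (f z.1, g z.2)) ⁻¹' {kl} = (f ⁻¹' {kl.1}) ×ˢ (g ⁻¹' {kl.2}) := by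
    intro kl; ext z; simp [Prod.ext_iff]
  have hblock : ∀ kl : ι × κ, γ ((f ⁻¹' {kl.1}) ×ˢ (g ⁻¹' {kl.2})) ≠ 0 →
      partitionBlock μ ν f g kl Set.univ = 1 := by
    intro kl h
    have hA := hf (measurableSet_singleton kl.1)
    have hB := hg (measurableSet_singleton kl.2)
    rw [partitionBlock, ← Set.univ_prod_univ, Measure.prod_prod,
      normRestrict_apply_univ (ne_bot_of_le_ne_bot h (hγ.apply_prod_le_left hA _))
        (measure_ne_top _ _),
      normRestrict_apply_univ (ne_bot_of_le_ne_bot h (hγ.apply_prod_le_right _ hB))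
        (measure_ne_top _ _), one_mul]
  have hfg : Measurable fun z : E × F => (f z.1, g z.2) := by fun_prop
  conv_rhs => rw [← Measure.sum_restrict_preimage_singleton γ hfg]
  simp only [partitionCoupling, Measure.map_sum measurable_fst.aemeasurable,
    Measure.map_fst_prod, hcell]
  congr 1; funext kl
  rcases eq_or_ne (γ ((f ⁻¹' {kl.1}) ×ˢ (g ⁻¹' {kl.2}))) 0 with h | h
  · simp [Measure.restrict_eq_zero.mpr h]
  · rw [hblock kl h, one_smul]

lemma ae_partitionCoupling [SFinite μ] [SFinite ν] (hf : Measurable f) (hg : Measurable g) :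
    ∀ᵐ w ∂partitionCoupling μ ν γ f g, f w.1.1 = f w.2.1 ∧ g w.1.2 = g w.2.2 := by
  refine Measure.ae_sum_iff.2 fun kl => ?_
  have hA := hf (measurableSet_singleton kl.1)
  have hB := hg (measurableSet_singleton kl.2)
  set S := (f ⁻¹' {kl.1}) ×ˢ (g ⁻¹' {kl.2})
  have h₁ : ∀ᵐ w ∂(γ.restrict S).prod (partitionBlock μ ν f g kl), w.1 ∈ S :=
    Measure.quasiMeasurePreserving_fst.ae (ae_restrict_mem (hA.prod hB))
  have h₂ : ∀ᵐ w ∂(γ.restrict S).prod (partitionBlock μ ν f g kl), w.2 ∈ S := by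
    refine Measure.quasiMeasurePreserving_snd.ae ?_
    filter_upwards [Measure.quasiMeasurePreserving_fst.ae (ae_normRestrict_mem hA),
      Measure.quasiMeasurePreserving_snd.ae (ae_normRestrict_mem hB)] with z hz₁ hz₂
    exact ⟨hz₁, hz₂⟩
  filter_upwards [h₁, h₂] with w hw₁ hw₂
  exact ⟨hw₁.1.trans hw₂.1.symm, hw₁.2.trans hw₂.2.symm⟩

end Partition

section Cubes

variable {d : ℕ} {δ : ℝ}

def cubeIndex (d : ℕ) (δ : ℝ) (x : Rd d) : Fin d → ℤ := fun i => ⌊x i / δ⌋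

lemma measurable_cubeIndex (d : ℕ) (δ : ℝ) : Measurable (cubeIndex d δ) := by
  unfold cubeIndex; fun_prop

lemma blockCube_eq_preimage_cubeIndex (hδ : 0 < δ) (k : Fin d → ℤ) :
    blockCube d δ k = cubeIndex d δ ⁻¹' {k} := by
  ext x
  simp only [blockCube, cubeIndex, Set.mem_ofPred_eq, Set.mem_Ico, Set.mem_preimage,
    Set.mem_singleton_iff, funext_iff, Int.floor_eq_iff, le_div_iff₀ hδ, div_lt_iff₀ hδ, mul_comm δ]

lemma blockApprox_eq_partitionApprox (μ ν : Measure (Rd d)) (γ : Measure (Rd d × Rd d))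
    (hδ : 0 < δ) :
    blockApprox μ ν γ δ = partitionApprox μ ν γ (cubeIndex d δ) (cubeIndex d δ) := by
  simp only [blockApprox, partitionApprox, partitionBlock, blockCube_eq_preimage_cubeIndex hδ]

lemma dist_sq_le_of_cubeIndex_eq (hδ : 0 < δ) {x y : Rd d}
    (h : cubeIndex d δ x = cubeIndex d δ y) : dist x y ^ 2 ≤ d * δ ^ 2 := by
  rw [EuclideanSpace.dist_eq, Real.sq_sqrt (by positivity)]
  calc ∑ i, dist (x i) (y i) ^ 2 ≤ ∑ _i : Fin d, δ ^ 2 := by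
        refine Finset.sum_le_sum fun i _ => ?_
        have h₁ : |x i / δ - y i / δ| < 1 := Int.abs_sub_lt_one_of_floor_eq_floor (congrFun h i)
        rw [← sub_div, abs_div, abs_of_pos hδ, div_lt_one hδ] at h₁
        rw [Real.dist_eq]
        exact pow_le_pow_left₀ (abs_nonneg _) h₁.le 2
    _ = d * δ ^ 2 := by simp

end Cubes

theorem blockApprox_Winfty_bound_general {d : ℕ}
    (μ ν : Measure (Rd d)) [IsProbabilityMeasure μ] [IsProbabilityMeasure ν]
    (γ : Measure (Rd d × Rd d)) (hγC : IsCoupling γ μ ν)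
    (δ : ℝ) (hδ : δ ∈ Set.Ioo (0 : ℝ) 1) :
    ∃ η : Measure ((Rd d × Rd d) × (Rd d × Rd d)),
      IsProbabilityMeasure η ∧ IsCoupling η γ (blockApprox μ ν γ δ) ∧
      essSup (fun w => ENNReal.ofReal (Real.sqrt (dist w.1.1 w.2.1 ^ 2 + dist w.1.2 w.2.2 ^ 2)))
          η ≤ ENNReal.ofReal (Real.sqrt (2 * d) * δ) := by
  have hcube := measurable_cubeIndex d δ
  have hη : IsCoupling (partitionCoupling μ ν γ (cubeIndex d δ) (cubeIndex d δ)) γ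
      (blockApprox μ ν γ δ) :=
    ⟨map_fst_partitionCoupling hγC hcube hcube,
      by rw [map_snd_partitionCoupling, blockApprox_eq_partitionApprox μ ν γ hδ.1]⟩
  have := hγC.isProbabilityMeasure
  refine ⟨_, hη.isProbabilityMeasure, hη, essSup_le_of_ae_le _ ?_⟩
  filter_upwards [ae_partitionCoupling hcube hcube] with w ⟨h₁, h₂⟩
  refine ENNReal.ofReal_le_ofReal ?_
  calc Real.sqrt (dist w.1.1 w.2.1 ^ 2 + dist w.1.2 w.2.2 ^ 2)
      ≤ Real.sqrt (2 * d * δ ^ 2) := Real.sqrt_le_sqrt (by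
        linarith [dist_sq_le_of_cubeIndex_eq hδ.1 h₁, dist_sq_le_of_cubeIndex_eq hδ.1 h₂])
    _ = Real.sqrt (2 * d) * δ := by rw [Real.sqrt_mul (by positivity), Real.sqrt_sq hδ.1.le]

/-- (∞-Wasserstein bound for the block approximation) There is a coupling η ∈ Π(γ, γ^δ) such
    that the η-essential supremum of the Euclidean distance |z − w| in ℝ^d × ℝ^d ≅ ℝ^{2d}
    between paired points is at most √(2d)·δ; in particular W_∞(γ, γ^δ) ≤ √(2d)·δ. -/
theorem blockApprox_Winfty_bound {d : ℕ}
    (μ ν : Measure (Rd d)) [IsProbabilityMeasure μ] [IsProbabilityMeasure ν]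
    (hμ : IsCompact (msupport μ)) (hν : IsCompact (msupport ν))
    (γ : Measure (Rd d × Rd d)) (hγP : IsProbabilityMeasure γ) (hγC : IsCoupling γ μ ν)
    (δ : ℝ) (hδ : δ ∈ Set.Ioo (0 : ℝ) 1) :
    ∃ η : Measure ((Rd d × Rd d) × (Rd d × Rd d)),
      IsProbabilityMeasure η ∧ IsCoupling η γ (blockApprox μ ν γ δ) ∧
      essSup (fun w => ENNReal.ofReal (Real.sqrt (dist w.1.1 w.2.1 ^ 2 + dist w.1.2 w.2.2 ^ 2)))
          η ≤ ENNReal.ofReal (Real.sqrt (2 * d) * δ) :=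
  blockApprox_Winfty_bound_general μ ν γ hγC δ hδ
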